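/- For every n ≥ 3, the code B_n of Construction 9 is a complete cyclic ternary 1-skew-tolerant Gray code of length n: it lists all 3^n vectors of (Z/3)^n, cyclically consecutive codewords differ by ±1 (mod 3) in exactly one coordinate, and cyclically consecutive transition positions differ by at most 1. -/

import Mathlib

/-- Codewords `c` and `d` differ exactly at coordinate `i` (1-based), by `±1` there. -/
def TransAt {m : ℕ} (c d : List (ZMod m)) (i : ℕ) : Prop :=
  1 ≤ i ∧ i ≤ c.length ∧ c.length = d.length ∧
  c.take (i-1) = d.take (i-1) ∧ c.drop i = d.drop i ∧
  (d.getD (i-1) 0 = c.getD (i-1) 0 + 1 ∨ d.getD (i-1) 0 = c.getD (i-1) 0 - 1)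

/-- `C` is a cyclic Gray code with transition sequence `δ`. -/
def CyclicGrayWith {m : ℕ} (C : List (List (ZMod m))) (δ : ℕ → ℕ) : Prop :=
  C.Nodup ∧ ∀ i < C.length,
    TransAt (C.getD i []) (C.getD ((i+1) % C.length) []) (δ i)

/-- `C` is a non-cyclic (path) Gray code with transition sequence `δ`. -/
def PathGrayWith {m : ℕ} (C : List (List (ZMod m))) (δ : ℕ → ℕ) : Prop :=
  C.Nodup ∧ ∀ i, i + 1 < C.length →
    TransAt (C.getD i []) (C.getD (i+1) []) (δ i)

/-- cyclic `k`-skew-tolerance. -/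
def SkewCyc (P : ℕ) (δ : ℕ → ℕ) (k : ℤ) : Prop :=
  ∀ i < P, |(δ i : ℤ) - (δ ((i+1) % P) : ℤ)| ≤ k

/-- non-cyclic `k`-skew-tolerance. -/
def SkewPath (P : ℕ) (δ : ℕ → ℕ) (k : ℤ) : Prop :=
  ∀ i, i + 2 < P → |(δ i : ℤ) - (δ (i+1) : ℤ)| ≤ k

/-- Construction 8, ternary codes `A_n` (`n ≥ 2`). -/
def t8A : ℕ → List (List (ZMod 3))
  | 0 => [] | 1 => []
  | 2 => [[0,0],[0,1],[0,2],[2,2],[2,0],[2,1],[1,1],[1,2],[1,0]]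
  | (n+3) =>
    let P := t8A (n+2)
    let c := P.headI
    let d := P.getLastD []
    let Q := P.tail.dropLast
    [c ++ [0], c ++ [2], c ++ [1]] ++
    Q.map (· ++ [1]) ++ Q.reverse.map (· ++ [0]) ++ Q.map (· ++ [2]) ++
    [d ++ [2], d ++ [1], d ++ [0]]

/-- Add `e_1` (over `ZMod 3`) to a codeword. -/
def addE1 : List (ZMod 3) → List (ZMod 3)
  | [] => []
  | x :: r => (x + 1) :: r

/-- Construction 9: `B_n = [A_{n-1}|0 ; (e_1 + A_{n-1})|1 ; (2e_1 + A_{n-1})|2]`. -/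
def t9B (n : ℕ) : List (List (ZMod 3)) :=
  (t8A (n-1)).map (· ++ [0]) ++
  (t8A (n-1)).map (fun c => addE1 c ++ [1]) ++
  (t8A (n-1)).map (fun c => addE1 (addE1 c) ++ [2])

/-
`B_n` is `A_{n-1}` followed by its translates by `e₁` and `2e₁`, tagged with a new last
coordinate `0, 1, 2`. Since `A_{n-1}` runs from `0` to `e₁`, each block ends one step of `e₁`
before the start of the next one, so the blocks (and, as `3e₁ = 0`, the end and the start of
`B_n`) are joined by a step in the last coordinate `n`. These joins are 1-skew-tolerant because
`A_{n-1}` begins and ends with two transitions at coordinate `n - 1`; Construction 8 propagates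
this by induction, as its new outer transitions are at the new coordinate and sit next to the old
boundary transitions.
-/

variable {m : ℕ}

open List

instance (c d : List (ZMod m)) (i : ℕ) : Decidable (TransAt c d i) := by
  unfold TransAt; infer_instance

namespace TransAt

variable {c d : List (ZMod m)} {i : ℕ}

theorem length_eq (h : TransAt c d i) : c.length = d.length := h.2.2.1

theorem symm (h : TransAt c d i) : TransAt d c i := by
  obtain ⟨h1, h2, h3, h4, h5, h6⟩ := h
  refine ⟨h1, h3 ▸ h2, h3.symm, h4.symm, h5.symm, ?_⟩
  rcases h6 with h | h
  · right; rw [h]; ring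
  · left; rw [h]; ring

theorem append_right (h : TransAt c d i) (x : ZMod m) : TransAt (c ++ [x]) (d ++ [x]) i := by
  obtain ⟨h1, h2, h3, h4, h5, h6⟩ := h
  refine ⟨h1, by rw [length_append, length_singleton]; omega, by simp [h3], ?_, ?_, ?_⟩
  · rw [take_append_of_le_length (by omega), take_append_of_le_length (by omega), h4]
  · rw [drop_append_of_le_length (by omega), drop_append_of_le_length (by omega), h5]
  · rwa [getD_append _ _ _ _ (by omega), getD_append _ _ _ _ (by omega)]

theorem map_addE1 {c d : List (ZMod 3)} (h : TransAt c d i) :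
    TransAt (addE1 c) (addE1 d) i := by
  obtain ⟨h1, h2, h3, h4, h5, h6⟩ := h
  match c, d, i with
  | [], _, _ => exact absurd (h1.trans h2) (by simp)
  | _ :: _, [], _ => simp at h3
  | x :: r, y :: s, 1 =>
    simp only [addE1]
    refine ⟨le_rfl, by simp, by simpa using h3, rfl, by simpa using h5, ?_⟩
    simp only [Nat.sub_self, getD_cons_zero] at h6 ⊢
    exact h6.imp (fun h => by linear_combination h) (fun h => by linear_combination h)
  | x :: r, y :: s, j + 2 =>
    obtain ⟨rfl, hrs⟩ : x = y ∧ r.take j = s.take j := by simpa using h4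
    simp only [addE1]
    exact ⟨h1, by simpa using h2, by simpa using h3, by simp [hrs], by simpa using h5, h6⟩

end TransAt

theorem transAt_append_singleton {w : List (ZMod m)} {n : ℕ} (hw : w.length = n)
    {a b : ZMod m} (h : b = a + 1 ∨ b = a - 1) : TransAt (w ++ [a]) (w ++ [b]) (n + 1) := by
  subst hw
  refine ⟨by omega, by simp, by simp, by simp, by simp, ?_⟩
  simpa [getD_append_right] using h

theorem length_addE1 (c : List (ZMod 3)) : (addE1 c).length = c.length := by
  cases c <;> rfl

theorem addE1_addE1_addE1 (c : List (ZMod 3)) : addE1 (addE1 (addE1 c)) = c := by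
  rcases c with _ | ⟨x, r⟩
  · rfl
  · simp only [addE1, cons.injEq, and_true]
    have h3 : (3 : ZMod 3) = 0 := rfl
    linear_combination h3

theorem bijective_addE1 : Function.Bijective addE1 :=
  Function.bijective_iff_has_inverse.2
    ⟨addE1 ∘ addE1, addE1_addE1_addE1, addE1_addE1_addE1⟩

theorem addE1_append {l : List (ZMod 3)} (hl : l ≠ []) (r : List (ZMod 3)) :
    addE1 (l ++ r) = addE1 l ++ r := by
  cases l
  · contradiction
  · rfl

def ListsAllWords {α : Type*} (n : ℕ) (L : List (List α)) : Prop :=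
  L.Nodup ∧ ∀ w, w ∈ L ↔ w.length = n

namespace ListsAllWords

variable {α : Type*} {n : ℕ} {L : List (List α)}

theorem length_eq [Fintype α] (h : ListsAllWords n L) : L.length = Fintype.card α ^ n := by
  classical
  rw [← toFinset_card_of_nodup h.1, ← card_vector, ← Fintype.card_coe]
  exact Fintype.card_congr (Equiv.subtypeEquivRight fun w => by simp [h.2])

theorem perm {L' : List (List α)} (h : ListsAllWords n L) (hp : L.Perm L') :
    ListsAllWords n L' :=
  ⟨hp.nodup_iff.1 h.1, fun w => hp.mem_iff.symm.trans (h.2 w)⟩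

theorem map {f : List α → List α} (h : ListsAllWords n L) (hf : Function.Bijective f)
    (hlen : ∀ w, (f w).length = w.length) : ListsAllWords n (L.map f) := by
  refine ⟨h.1.map hf.1, fun w => ⟨fun hw => ?_, fun hw => ?_⟩⟩
  · obtain ⟨u, hu, rfl⟩ := mem_map.1 hw
    rw [hlen, ← h.2]
    exact hu
  · obtain ⟨u, rfl⟩ := hf.2 w
    exact mem_map_of_mem ((h.2 u).2 (hlen u ▸ hw))

end ListsAllWords

theorem listsAllWords_append_last {n : ℕ} {L₀ L₁ L₂ : List (List (ZMod 3))}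
    (h₀ : ListsAllWords n L₀) (h₁ : ListsAllWords n L₁) (h₂ : ListsAllWords n L₂) :
    ListsAllWords (n + 1) (L₀.map (· ++ [0]) ++ L₁.map (· ++ [1]) ++ L₂.map (· ++ [2])) := by
  have hinj (x : ZMod 3) : Function.Injective (· ++ [x]) := fun _ _ => append_cancel_right
  have hlast {u v : List (ZMod 3)} {x y : ZMod 3} (h : u ++ [x] = v ++ [y]) : x = y := by
    simpa using congrArg getLast? h
  refine ⟨?_, fun w => ⟨fun hw => ?_, fun hw => ?_⟩⟩
  · simp only [nodup_append, h₀.1.map (hinj 0), h₁.1.map (hinj 1), h₂.1.map (hinj 2),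
      mem_append, mem_map, true_and]
    refine ⟨?_, ?_⟩
    · rintro _ ⟨u, -, rfl⟩ _ ⟨v, -, rfl⟩ h
      exact absurd (hlast h) (by decide)
    · rintro _ (⟨u, -, rfl⟩ | ⟨u, -, rfl⟩) _ ⟨v, -, rfl⟩ h <;> exact absurd (hlast h) (by decide)
  · simp only [mem_append, mem_map] at hw
    rcases hw with (⟨u, hu, rfl⟩ | ⟨u, hu, rfl⟩) | ⟨u, hu, rfl⟩ <;>
      simp [(h₀.2 u).1, (h₁.2 u).1, (h₂.2 u).1, hu]
  · obtain ⟨u, x, rfl⟩ : ∃ u x, w = u ++ [x] :=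
      ⟨w.dropLast, w.getLast (ne_nil_of_length_pos (by omega)), (dropLast_append_getLast _).symm⟩
    have hu : u.length = n := by simpa using hw
    rcases (by decide : ∀ x : ZMod 3, x = 0 ∨ x = 1 ∨ x = 2) x with rfl | rfl | rfl
    · exact mem_append_left _ (mem_append_left _ (mem_map_of_mem ((h₀.2 u).2 hu)))
    · exact mem_append_left _ (mem_append_right _ (mem_map_of_mem ((h₁.2 u).2 hu)))
    · exact mem_append_right _ (mem_map_of_mem ((h₂.2 u).2 hu))

/-- `l` is a Gray path from `a` to `b` whose `k`-th step changes coordinate `ts[k]`. -/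
inductive GrayPath : List (ZMod m) → List (ZMod m) → List (List (ZMod m)) → List ℕ → Prop
  | single (a : List (ZMod m)) : GrayPath a a [a] []
  | cons {a b z : List (ZMod m)} {l : List (List (ZMod m))} {ts : List ℕ} {i : ℕ} :
      TransAt a b i → GrayPath b z l ts → GrayPath a z (a :: l) (i :: ts)

namespace GrayPath

variable {a b c z : List (ZMod m)} {l l' : List (List (ZMod m))} {ts ts' : List ℕ} {i : ℕ}

theorem append (h : GrayPath a b l ts) (hbc : TransAt b c i) (h' : GrayPath c z l' ts') :
    GrayPath a z (l ++ l') (ts ++ i :: ts') := by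
  induction h with
  | single a => exact cons hbc h'
  | cons hab _ ih => exact cons hab (ih hbc)

theorem reverse (h : GrayPath a b l ts) : GrayPath b a l.reverse ts.reverse := by
  induction h with
  | single a => exact single a
  | cons hab _ ih => simpa using ih.append hab.symm (single _)

theorem map {f : List (ZMod m) → List (ZMod m)}
    (hf : ∀ {c d : List (ZMod m)} {i : ℕ}, TransAt c d i → TransAt (f c) (f d) i)
    (h : GrayPath a b l ts) : GrayPath (f a) (f b) (l.map f) ts := by
  induction h with
  | single a => exact single (f a)
  | cons hab _ ih => exact cons (hf hab) ih

theorem length_eq (h : GrayPath a b l ts) : l.length = ts.length + 1 := by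
  induction h with
  | single a => rfl
  | cons _ _ ih => simp [ih]

theorem getD_zero (h : GrayPath a b l ts) : l.getD 0 [] = a := by
  cases h <;> rfl

theorem transAt_getD (h : GrayPath a b l ts) {k : ℕ} (hk : k + 1 < l.length) :
    TransAt (l.getD k []) (l.getD (k + 1) []) (ts.getD k 0) := by
  induction h generalizing k with
  | single a => simp at hk
  | cons hab h ih =>
    cases k with
    | zero =>
      simp only [getD_cons_zero, getD_cons_succ, h.getD_zero]
      exact hab
    | succ k => exact ih (by simpa using hk)

theorem cyclicGrayWith (h : GrayPath a b l ts) (hba : TransAt b a i) (hl : l.Nodup) :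
    CyclicGrayWith l (fun k => (ts ++ [i]).getD k 0) := by
  refine ⟨hl, fun k hk => ?_⟩
  have hcyc := (h.append hba (single a)).transAt_getD (k := k) (by simpa using hk)
  rw [getD_append _ _ _ _ hk] at hcyc
  rcases Nat.lt_or_ge (k + 1) l.length with hk' | hk'
  · rwa [Nat.mod_eq_of_lt hk', ← getD_append _ _ _ _ hk']
  · have hk1 : k + 1 = l.length := by omega
    rw [hk1, getD_append_right _ _ _ _ le_rfl, Nat.sub_self, getD_cons_zero] at hcyc
    rwa [hk1, Nat.mod_self, h.getD_zero]

end GrayPath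

def Skew (k : ℤ) (a b : ℕ) : Prop := |(a : ℤ) - b| ≤ k

theorem skew_comm {k : ℤ} {a b : ℕ} : Skew k a b ↔ Skew k b a := by
  rw [Skew, Skew, abs_sub_comm]

@[simp] theorem skew_one_self (a : ℕ) : Skew 1 a a := by simp [Skew]

@[simp] theorem skew_one_succ_right (a : ℕ) : Skew 1 a (a + 1) := by simp [Skew]

@[simp] theorem skew_one_succ_left (a : ℕ) : Skew 1 (a + 1) a := by simp [Skew]

theorem skewCyc_of_isChain {k : ℤ} {t : ℕ} {ts : List ℕ}
    (h : (t :: (ts ++ [t])).IsChain (Skew k)) :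
    SkewCyc (ts.length + 1) (fun j => (ts ++ [t]).getD j 0) k := by
  intro j hj
  have hlen : (ts ++ [t]).length = ts.length + 1 := by simp
  show Skew k ((ts ++ [t]).getD j 0) ((ts ++ [t]).getD ((j + 1) % (ts.length + 1)) 0)
  rw [getD_eq_getElem _ _ (by omega)]
  rcases Nat.lt_or_ge (j + 1) (ts.length + 1) with hj' | hj'
  · rw [Nat.mod_eq_of_lt hj', getD_eq_getElem _ _ (by omega)]
    exact h.getElem (j + 1) (by simpa using hj')
  · obtain rfl : j = ts.length := by omega
    rw [Nat.mod_self, getD_eq_getElem _ _ (by omega)]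
    simpa using h.getElem 0 (by simp)

theorem t8A_succ {n : ℕ} (hn : 2 ≤ n) {c d : List (ZMod 3)} {Q : List (List (ZMod 3))}
    (h : t8A n = c :: (Q ++ [d])) :
    t8A (n + 1) = [c ++ [0], c ++ [2], c ++ [1]] ++ Q.map (· ++ [1]) ++
      Q.reverse.map (· ++ [0]) ++ Q.map (· ++ [2]) ++ [d ++ [2], d ++ [1], d ++ [0]] := by
  have hlast : (c :: (Q ++ [d])).getLastD [] = d := by
    rw [← cons_append, getLastD_concat]
  obtain ⟨k, rfl⟩ : ∃ k, n = k + 2 := ⟨n - 2, by omega⟩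
  rw [t8A, h, hlast]
  simp

theorem t8A_succ_perm {n : ℕ} (hn : 2 ≤ n) {c d : List (ZMod 3)} {Q : List (List (ZMod 3))}
    (h : t8A n = c :: (Q ++ [d])) :
    (t8A (n + 1)).Perm
      ((t8A n).map (· ++ [0]) ++ (t8A n).map (· ++ [1]) ++ (t8A n).map (· ++ [2])) := by
  rw [← Multiset.coe_eq_coe, t8A_succ hn h, h]
  simp only [map_cons, map_append, map_reverse, ← Multiset.coe_add, Multiset.coe_reverse,
    ← Multiset.cons_coe, ← Multiset.singleton_add, Multiset.coe_nil]
  abel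

/-- `A` runs from `0ⁿ` to `e₁ = addE1 0ⁿ` and its first two and last two transitions are at
coordinate `n`. The inner path `Q` is exposed because Construction 8 is built from it. -/
def IsSkewGrayA (n : ℕ) (A : List (List (ZMod 3))) : Prop :=
  ∃ (q q' : List (ZMod 3)) (Q : List (List (ZMod 3))) (mid : List ℕ),
    A = replicate n 0 :: (Q ++ [addE1 (replicate n 0)]) ∧
    TransAt (replicate n 0) q n ∧ GrayPath q q' Q mid ∧ TransAt q' (addE1 (replicate n 0)) n ∧
    mid.head? = some n ∧ mid.getLast? = some n ∧ mid.IsChain (Skew 1)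

theorem isSkewGrayA_t8A_succ {n : ℕ} (hn : 2 ≤ n) (h : IsSkewGrayA n (t8A n)) :
    IsSkewGrayA (n + 1) (t8A (n + 1)) := by
  obtain ⟨q, q', Q, mid, hA, hcq, hQ, hq'd, hhead, hlast, hchain⟩ := h
  set c := replicate n (0 : ZMod 3)
  have hc : c.length = n := length_replicate
  have hd : (addE1 c).length = n := (length_addE1 c).trans hc
  have hq : q.length = n := hcq.length_eq ▸ hc
  have hq' : q'.length = n := hq'd.length_eq.trans hd
  have hc0 : replicate (n + 1) (0 : ZMod 3) = c ++ [0] := replicate_succ'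
  have hd0 : addE1 (replicate (n + 1) (0 : ZMod 3)) = addE1 c ++ [0] := by
    rw [hc0, addE1_append (ne_nil_of_length_pos (by omega))]
  have hpath := (GrayPath.single (c ++ [2])).append (transAt_append_singleton hc (by decide))
    ((GrayPath.single (c ++ [1])).append (hcq.append_right 1)
    ((hQ.map (·.append_right 1)).append (transAt_append_singleton hq' (by decide))
    ((hQ.reverse.map (·.append_right 0)).append (transAt_append_singleton hq (by decide))
    ((hQ.map (·.append_right 2)).append (hq'd.append_right 2)
    ((GrayPath.single (addE1 c ++ [2])).append (transAt_append_singleton hd (by decide))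
    (GrayPath.single (addE1 c ++ [1])))))))
  refine ⟨_, _, _, _, ?_, ?_, hpath, ?_, rfl, ?_, ?_⟩
  · rw [t8A_succ hn hA, hd0, hc0]
    simp
  · rw [hc0]
    exact transAt_append_singleton hc (by decide)
  · rw [hd0]
    exact transAt_append_singleton hd (by decide)
  · simp [getLast?_cons, getLast?_append]
  · simp [isChain_cons, isChain_append, head?_append, hhead, hlast, hchain, isChain_reverse,
      skew_comm]

theorem listsAllWords_t8A_two : ListsAllWords 2 (t8A 2) := by
  refine ⟨by decide, fun w => ⟨fun hw => ?_, fun hw => ?_⟩⟩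
  · exact (by decide : ∀ w ∈ t8A 2, w.length = 2) w hw
  · match w, hw with
    | [a, b], _ => exact (by decide : ∀ a b : ZMod 3, [a, b] ∈ t8A 2) a b

theorem isSkewGrayA_t8A_two : IsSkewGrayA 2 (t8A 2) := by
  refine ⟨[0, 1], [1, 2], [[0, 1], [0, 2], [2, 2], [2, 0], [2, 1], [1, 1], [1, 2]],
    [2, 1, 2, 2, 1, 2], rfl, by decide, ?_, by decide, rfl, rfl, by simp [Skew]⟩
  refine .cons ?_ <| .cons ?_ <| .cons ?_ <| .cons ?_ <| .cons ?_ <| .cons ?_ <| .single _ <;>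
    decide

theorem listsAllWords_t8A_succ {n : ℕ} (hn : 2 ≤ n) (hL : ListsAllWords n (t8A n))
    (hS : IsSkewGrayA n (t8A n)) : ListsAllWords (n + 1) (t8A (n + 1)) := by
  obtain ⟨-, -, Q, -, hA, -⟩ := hS
  exact (listsAllWords_append_last hL hL hL).perm (t8A_succ_perm hn hA).symm

theorem t8A_spec {n : ℕ} (hn : 2 ≤ n) : ListsAllWords n (t8A n) ∧ IsSkewGrayA n (t8A n) := by
  induction n, hn using Nat.le_induction with
  | base => exact ⟨listsAllWords_t8A_two, isSkewGrayA_t8A_two⟩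
  | succ n hn ih => exact ⟨listsAllWords_t8A_succ hn ih.1 ih.2, isSkewGrayA_t8A_succ hn ih.2⟩

theorem listsAllWords_t9B {k : ℕ} (h : ListsAllWords k (t8A k)) :
    ListsAllWords (k + 1) (t9B (k + 1)) := by
  have hB : t9B (k + 1) = (t8A k).map (· ++ [0]) ++ ((t8A k).map addE1).map (· ++ [1]) ++
      ((t8A k).map (addE1 ∘ addE1)).map (· ++ [2]) := by
    simp only [t9B, map_map]
    rfl
  rw [hB]
  exact listsAllWords_append_last h (h.map bijective_addE1 length_addE1)
    (h.map (bijective_addE1.comp bijective_addE1) (by simp [length_addE1]))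

theorem exists_cyclicGrayWith_t9B {k : ℕ} (hA : IsSkewGrayA k (t8A k))
    (hnd : (t9B (k + 1)).Nodup) :
    ∃ δ, CyclicGrayWith (t9B (k + 1)) δ ∧ SkewCyc (t9B (k + 1)).length δ 1 := by
  obtain ⟨q, q', Q, mid, hA, hcq, hQ, hq'd, hhead, hlast, hchain⟩ := hA
  set c := replicate k (0 : ZMod 3)
  have hc : c.length = k := length_replicate
  have hd : (addE1 c).length = k := (length_addE1 c).trans hc
  have hdd : (addE1 (addE1 c)).length = k := (length_addE1 _).trans hd
  set tsA := k :: (mid ++ [k])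
  have hpathA : GrayPath c (addE1 c) (t8A k) tsA := by
    rw [hA]
    exact (GrayPath.single c).append hcq (hQ.append hq'd (.single _))
  have hpathB : GrayPath (c ++ [0]) (addE1 (addE1 (addE1 c)) ++ [2]) (t9B (k + 1))
      (tsA ++ (k + 1) :: (tsA ++ (k + 1) :: tsA)) := by
    rw [t9B, Nat.add_sub_cancel, append_assoc]
    exact (hpathA.map (·.append_right 0)).append (transAt_append_singleton hd (by decide))
      ((hpathA.map (·.map_addE1.append_right 1)).append
        (transAt_append_singleton hdd (by decide))
        (hpathA.map (·.map_addE1.map_addE1.append_right 2)))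
  have hwrap : TransAt (addE1 (addE1 (addE1 c)) ++ [2]) (c ++ [0]) (k + 1) := by
    rw [addE1_addE1_addE1]
    exact transAt_append_singleton hc (by decide)
  refine ⟨_, hpathB.cyclicGrayWith hwrap hnd, ?_⟩
  rw [hpathB.length_eq]
  apply skewCyc_of_isChain
  simp [tsA, isChain_cons, isChain_append, head?_append, hhead, hlast, hchain]

theorem stmt17 : ∀ n : ℕ, 3 ≤ n →
    (∀ c ∈ t9B n, c.length = n) ∧ (t9B n).length = 3 ^ n ∧
    (∀ c : List (ZMod 3), c.length = n → c ∈ t9B n) ∧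
    ∃ δ : ℕ → ℕ, CyclicGrayWith (t9B n) δ ∧ SkewCyc (t9B n).length δ 1 := by
  intro n hn
  obtain ⟨k, rfl⟩ : ∃ k, n = k + 1 := ⟨n - 1, by omega⟩
  obtain ⟨hL, hS⟩ := t8A_spec (n := k) (by omega)
  have hB := listsAllWords_t9B hL
  exact ⟨fun c => (hB.2 c).1, by rw [hB.length_eq, ZMod.card], fun c => (hB.2 c).2,
    exists_cyclicGrayWith_t9B hS hB.1⟩
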